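/- arXiv:cs/0508087 — 2 statements merged into one kernel-verified Lean document; each statement's English description precedes it below -/
import Mathlib

section
/- Let G be a finite directed multigraph in which every vertex satisfies F⁺(v) = F⁻(v) and there is at least one edge with positive multiplicity. Then starting from any vertex x with F⁺(x) > 0, there exists a closed path starting and ending at x that uses each edge e at most f(e) times and has positive length. -/
open Finset

/-- A path: a list of edges where the target of each edge equals the source of the next. -/
def IsPath {α : Type*} (p : List (α × α)) : Prop :=
  p.Chain' (fun e e' => e.2 = e'.1)

/-- An Eulerian path in the directed multigraph with edge set `E` and multiplicities `f`:
a path whose edges all lie in `E` and which uses each edge `e ∈ E` exactly `f e` times. -/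
def IsEulerian {α : Type*} [DecidableEq α] (E : Finset (α × α)) (f : α × α → ℕ)
    (p : List (α × α)) : Prop :=
  IsPath p ∧ (∀ e ∈ p, e ∈ E) ∧ (∀ e ∈ E, p.count e = f e)

/-- Out-degree of `v` counted with multiplicity. -/
def Fplus {α : Type*} [DecidableEq α] (E : Finset (α × α)) (f : α × α → ℕ) (v : α) : ℕ :=
  ∑ e ∈ E.filter (fun e => e.1 = v), f e

/-- In-degree of `v` counted with multiplicity. -/
def Fminus {α : Type*} [DecidableEq α] (E : Finset (α × α)) (f : α × α → ℕ) (v : α) : ℕ :=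
  ∑ e ∈ E.filter (fun e => e.2 = v), f e

/-- Two vertices are directly linked if some edge of `E` joins them in either direction. -/
def LinkRel {α : Type*} (E : Finset (α × α)) (a b : α) : Prop :=
  (a, b) ∈ E ∨ (b, a) ∈ E

/-- The multigraph is connected: any two vertices are joined by a chain
(a sequence of edges, directions ignored). -/
def ConnectedGraph {α : Type*} (V : Finset α) (E : Finset (α × α)) : Prop :=
  ∀ a ∈ V, ∀ b ∈ V, Relation.ReflTransGen (LinkRel E) a b


/-! Walk greedily from `x` along edges whose multiplicity is not used up yet. A walk from `x`
that sits at a vertex `v ≠ x` has entered `v` once more than it has left it, so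
`F⁺(v) = F⁻(v)` leaves an unused edge out of `v`. Since the length of such a walk is bounded
by `∑ f`, it cannot be extended forever, hence it eventually returns to `x`. -/

theorem List.countP_eq_sum_count_of_forall_mem {β : Type*} [BEq β] [LawfulBEq β] {l : List β}
    {s : Finset β} (hl : ∀ a ∈ l, a ∈ s) (P : β → Prop) [DecidablePred P] :
    l.countP P = ∑ a ∈ s with P a, l.count a := by
  classical
  obtain rfl : ‹BEq β› = instBEqOfDecidableEq := lawful_beq_subsingleton _ _
  rw [← Finset.sum_filter_count_eq_countP]
  refine Finset.sum_subset (fun a ha => ?_) (fun a _ ha => ?_)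
  · simp only [Finset.mem_filter, List.mem_toFinset] at ha ⊢
    exact ⟨hl a ha.1, ha.2⟩
  · simp_all [List.count_eq_zero]

theorem List.length_le_sum_of_count_le {β : Type*} [BEq β] [LawfulBEq β] {l : List β}
    {s : Finset β} {f : β → ℕ} (hl : ∀ a ∈ l, a ∈ s) (hf : ∀ a ∈ s, l.count a ≤ f a) :
    l.length ≤ ∑ a ∈ s, f a :=
  calc l.length = ∑ a ∈ s, l.count a := by
        simpa using l.countP_eq_sum_count_of_forall_mem hl (fun _ => True)
    _ ≤ ∑ a ∈ s, f a := Finset.sum_le_sum hf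

namespace IsPath

variable {α : Type*} {p : List (α × α)}

theorem append_singleton (hp : IsPath p) (h : p ≠ []) {e : α × α}
    (he : (p.getLast h).2 = e.1) : IsPath (p ++ [e]) :=
  hp.append (List.isChain_singleton e) (by simp_all [List.getLast?_eq_some_getLast h])

theorem map_fst_append_getLast (hp : IsPath p) (h : p ≠ []) :
    p.map Prod.fst ++ [(p.getLast h).2] = (p.head h).1 :: p.map Prod.snd := by
  induction p with
  | nil => exact absurd rfl h
  | cons e p ih =>
    cases p with
    | nil => rfl
    | cons a t =>
      obtain ⟨hea, hp⟩ := List.isChain_cons_cons.mp hp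
      have ih := ih hp (List.cons_ne_nil a t)
      simp only [List.map_cons, List.head_cons, List.cons_append] at ih ⊢
      rw [List.getLast_cons (List.cons_ne_nil a t), ih, hea]

theorem countP_snd_eq_countP_fst_add_one [DecidableEq α] (hp : IsPath p) (h : p ≠ []) {v : α}
    (hx : (p.head h).1 ≠ v) (hv : (p.getLast h).2 = v) :
    p.countP (·.2 = v) = p.countP (·.1 = v) + 1 := by
  have := congrArg (List.countP (· = v)) (hp.map_fst_append_getLast h)
  simpa [List.countP_map, Function.comp_def, hx, hv] using this.symm

end IsPath

section ClosedPath

variable {α : Type*} [DecidableEq α] {E : Finset (α × α)} {f : α × α → ℕ} {p : List (α × α)}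

theorem exists_unused_out_edge (hp : IsPath p) (h : p ≠ []) (hE : ∀ e ∈ p, e ∈ E)
    (hcap : ∀ e ∈ E, p.count e ≤ f e) {v : α} (hbal : Fplus E f v = Fminus E f v)
    (hx : (p.head h).1 ≠ v) (hv : (p.getLast h).2 = v) :
    ∃ e ∈ E, e.1 = v ∧ p.count e < f e := by
  have hin : p.countP (·.2 = v) ≤ Fminus E f v := by
    rw [List.countP_eq_sum_count_of_forall_mem hE, Fminus]
    exact Finset.sum_le_sum fun e he => hcap e (Finset.mem_filter.1 he).1
  have hout : ∑ e ∈ E with e.1 = v, p.count e < ∑ e ∈ E with e.1 = v, f e := by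
    rw [← List.countP_eq_sum_count_of_forall_mem hE, ← Fplus]
    have := hp.countP_snd_eq_countP_fst_add_one h hx hv
    omega
  obtain ⟨e, he, hlt⟩ := Finset.exists_lt_of_sum_lt hout
  exact ⟨e, (Finset.mem_filter.1 he).1, (Finset.mem_filter.1 he).2, hlt⟩

theorem exists_closed_path_extending (hbal : ∀ v, Fplus E f v = Fminus E f v) {x : α}
    (p : List (α × α)) (h : p ≠ []) (hp : IsPath p) (hE : ∀ e ∈ p, e ∈ E)
    (hcap : ∀ e ∈ E, p.count e ≤ f e) (hx : (p.head h).1 = x) :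
    ∃ q : List (α × α), ∃ hq : q ≠ [],
      IsPath q ∧ (∀ e ∈ q, e ∈ E) ∧ (∀ e ∈ E, q.count e ≤ f e) ∧
      (q.head hq).1 = x ∧ (q.getLast hq).2 = x := by
  by_cases hclosed : (p.getLast h).2 = x
  · exact ⟨p, h, hp, hE, hcap, hx, hclosed⟩
  obtain ⟨e, heE, he, hlt⟩ :=
    exists_unused_out_edge hp h hE hcap (hbal _) (hx ▸ Ne.symm hclosed) rfl
  have hE' : ∀ e' ∈ p ++ [e], e' ∈ E := fun e' he' =>
    (List.mem_append.1 he').elim (hE e') fun h => List.mem_singleton.1 h ▸ heE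
  have hcap' : ∀ e' ∈ E, (p ++ [e]).count e' ≤ f e' := by
    intro e' he'
    have := hcap e' he'
    rw [List.count_append, List.count_singleton]
    split_ifs with hee' <;> simp_all
  exact exists_closed_path_extending hbal (p ++ [e]) (by simp)
    (hp.append_singleton h he.symm) hE' hcap' (by rwa [List.head_append_of_ne_nil h])
termination_by (∑ e ∈ E, f e) - p.length
decreasing_by
  have := List.length_le_sum_of_count_le hE' hcap'
  simp only [List.length_append, List.length_singleton] at this ⊢
  omega

end ClosedPath

theorem stmt17 {α : Type*} [DecidableEq α] (E : Finset (α × α)) (f : α × α → ℕ)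
    (hbal : ∀ v : α, Fplus E f v = Fminus E f v)
    (x : α) (hx : 0 < Fplus E f x) :
    ∃ p : List (α × α), ∃ h : p ≠ [],
      IsPath p ∧ (∀ e ∈ p, e ∈ E) ∧ (∀ e ∈ E, p.count e ≤ f e) ∧
      (p.head h).1 = x ∧ (p.getLast h).2 = x := by
  obtain ⟨e, he, hpos⟩ :=
    Finset.exists_lt_of_sum_lt (f := fun _ => 0) (by simpa [Fplus] using hx)
  obtain ⟨heE, rfl⟩ := Finset.mem_filter.1 he
  refine exists_closed_path_extending hbal [e] (List.cons_ne_nil e []) (List.isChain_singleton e)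
    (by simpa using heE) (fun e' _ => ?_) rfl
  rw [List.count_singleton]
  split_ifs with hee'
  · exact beq_iff_eq.1 hee' ▸ hpos
  · exact Nat.zero_le _
end

section
/- Let G be a finite connected directed multigraph with F⁺(v) = F⁻(v) for all vertices v, and let P be a path in G of maximal length among paths using each edge e at most f(e) times. If P is strictly shorter than the total multiplicity Σ_{e∈E} f(e), then there exists an edge (x,y) with f(x,y) strictly greater than the number of occurrences of (x,y) in P, such that x appears as an endpoint of some edge occurring in P. -/
open Finset

/-!
Let `S` be the set of vertices met by `P` and suppose every edge leaving `S` is saturated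
(used by `P` as often as `f` allows). Then the edges leaving `S` have total multiplicity `|P|`;
by balance so do the edges entering `S`, which `P` also uses `|P|` times, so they are saturated
as well. Saturated edges lie on `P`, so `S` is closed under adjacency and, by connectivity,
contains the source of an unsaturated edge, which exists because `|P| < Σ f`.
-/

namespace DirectedMultigraph

variable {α : Type*}

lemma mem_iff_mem_of_connectedGraph {V S : Finset α} {E : Finset (α × α)}
    (hconn : ConnectedGraph V E) (hS : ∀ a b, (a, b) ∈ E → (a ∈ S ↔ b ∈ S)) {a b : α} (ha : a ∈ V) (hb : b ∈ V) :
    a ∈ S ↔ b ∈ S := by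
  have hab := hconn a ha b hb
  clear hb
  induction hab with
  | refl => rfl
  | tail _ hlink ih =>
    rcases hlink with h | h
    exacts [ih.trans (hS _ _ h), ih.trans (hS _ _ h).symm]

variable [DecidableEq α]

def vertices (P : List (α × α)) : Finset α :=
  (P.map Prod.fst ++ P.map Prod.snd).toFinset

lemma mem_vertices {P : List (α × α)} {x : α} :
    x ∈ vertices P ↔ ∃ e ∈ P, e.1 = x ∨ e.2 = x := by
  simp only [vertices, List.mem_toFinset, List.mem_append, List.mem_map]
  constructor
  · rintro (⟨e, he, rfl⟩ | ⟨e, he, rfl⟩)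
    exacts [⟨e, he, .inl rfl⟩, ⟨e, he, .inr rfl⟩]
  · rintro ⟨e, he, rfl | rfl⟩
    exacts [.inl ⟨e, he, rfl⟩, .inr ⟨e, he, rfl⟩]

lemma fst_mem_vertices {P : List (α × α)} {e : α × α} (he : e ∈ P) : e.1 ∈ vertices P :=
  mem_vertices.2 ⟨e, he, .inl rfl⟩

lemma snd_mem_vertices {P : List (α × α)} {e : α × α} (he : e ∈ P) : e.2 ∈ vertices P :=
  mem_vertices.2 ⟨e, he, .inr rfl⟩

lemma sum_count_eq_length {β : Type*} [DecidableEq β] [BEq β] [LawfulBEq β] {s : Finset β}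
    {P : List β} (hP : ∀ e ∈ P, e ∈ s) : ∑ e ∈ s, P.count e = P.length := by
  have h := Multiset.sum_count_eq_card (m := (P : Multiset β)) hP
  simp only [Multiset.coe_count, Multiset.coe_card] at h
  convert h using 3
  exact lawful_beq_subsingleton _ _

lemma sum_filter_fst_mem_eq_sum_filter_snd_mem {E : Finset (α × α)} {f : α × α → ℕ}
    (hbal : ∀ v, Fplus E f v = Fminus E f v) (S : Finset α) :
    ∑ e ∈ E with e.1 ∈ S, f e = ∑ e ∈ E with e.2 ∈ S, f e := by
  rw [← sum_fiberwise_eq_sum_filter E S Prod.fst f, ← sum_fiberwise_eq_sum_filter E S Prod.snd f]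
  exact sum_congr rfl fun v _ => hbal v

lemma count_eq_of_snd_mem_vertices {E : Finset (α × α)} {f : α × α → ℕ}
    (hbal : ∀ v, Fplus E f v = Fminus E f v) {P : List (α × α)} (hPE : ∀ e ∈ P, e ∈ E)
    (hcount : ∀ e ∈ E, P.count e ≤ f e)
    (hout : ∀ e ∈ E, e.1 ∈ vertices P → P.count e = f e) :
    ∀ e ∈ E, e.2 ∈ vertices P → P.count e = f e := by
  have hin_le : ∀ e ∈ {e ∈ E | e.2 ∈ vertices P}, P.count e ≤ f e :=
    fun e he => hcount e (mem_filter.1 he).1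
  have hin_sum : ∑ e ∈ E with e.2 ∈ vertices P, f e = ∑ e ∈ E with e.2 ∈ vertices P, P.count e :=
    calc ∑ e ∈ E with e.2 ∈ vertices P, f e
        = ∑ e ∈ E with e.1 ∈ vertices P, f e :=
          (sum_filter_fst_mem_eq_sum_filter_snd_mem hbal _).symm
      _ = ∑ e ∈ E with e.1 ∈ vertices P, P.count e :=
          sum_congr rfl fun e he => (hout e (mem_filter.1 he).1 (mem_filter.1 he).2).symm
      _ = P.length :=
          sum_count_eq_length fun e he => mem_filter.2 ⟨hPE e he, fst_mem_vertices he⟩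
      _ = ∑ e ∈ E with e.2 ∈ vertices P, P.count e :=
          (sum_count_eq_length fun e he => mem_filter.2 ⟨hPE e he, snd_mem_vertices he⟩).symm
  intro e he hv
  exact (sum_eq_sum_iff_of_le hin_le).1 hin_sum.symm e (mem_filter.2 ⟨he, hv⟩)

lemma exists_count_lt_of_length_lt {E : Finset (α × α)} {f : α × α → ℕ} {P : List (α × α)}
    (hPE : ∀ e ∈ P, e ∈ E) (hlt : P.length < ∑ e ∈ E, f e) : ∃ e ∈ E, P.count e < f e := by
  by_contra! h
  exact (sum_count_eq_length hPE ▸ sum_le_sum h).not_gt hlt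

theorem exists_count_lt_fst_mem_vertices {V : Finset α} {E : Finset (α × α)} {f : α × α → ℕ}
    (hE : ∀ e ∈ E, e.1 ∈ V ∧ e.2 ∈ V) (hf : ∀ e ∈ E, 1 ≤ f e) (hconn : ConnectedGraph V E)
    (hbal : ∀ v, Fplus E f v = Fminus E f v) {P : List (α × α)} (hPne : P ≠ [])
    (hPE : ∀ e ∈ P, e ∈ E) (hcount : ∀ e ∈ E, P.count e ≤ f e)
    (hdef : ∃ e ∈ E, P.count e < f e) :
    ∃ e ∈ E, P.count e < f e ∧ e.1 ∈ vertices P := by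
  by_contra! hsat
  replace hsat : ∀ e ∈ E, e.1 ∈ vertices P → P.count e = f e :=
    fun e he hv => le_antisymm (hcount e he) (not_lt.1 fun h => hsat e he h hv)
  have hin := count_eq_of_snd_mem_vertices hbal hPE hcount hsat
  have mem_of_count_eq {e : α × α} (he : e ∈ E) (hc : P.count e = f e) : e ∈ P :=
    List.count_pos_iff.1 (hc ▸ hf e he)
  have hclosed : ∀ a b, (a, b) ∈ E → (a ∈ vertices P ↔ b ∈ vertices P) := fun a b h =>
    ⟨fun ha => snd_mem_vertices (mem_of_count_eq h (hsat _ h ha)),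
     fun hb => fst_mem_vertices (mem_of_count_eq h (hin _ h hb))⟩
  obtain ⟨e₀, he₀, hlt₀⟩ := hdef
  obtain ⟨e₁, he₁⟩ := List.exists_mem_of_ne_nil P hPne
  have hv₀ : e₀.1 ∈ vertices P :=
    (mem_iff_mem_of_connectedGraph hconn hclosed (hE e₀ he₀).1 (hE e₁ (hPE e₁ he₁)).1).2
      (fst_mem_vertices he₁)
  exact hlt₀.ne (hsat e₀ he₀ hv₀)

end DirectedMultigraph

open DirectedMultigraph in
theorem stmt19_general {α : Type*} [DecidableEq α] (V : Finset α) (E : Finset (α × α))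
    (f : α × α → ℕ) (hE : ∀ e ∈ E, e.1 ∈ V ∧ e.2 ∈ V)
    (hf : ∀ e ∈ E, 1 ≤ f e)
    (hconn : ConnectedGraph V E)
    (hbal : ∀ v : α, Fplus E f v = Fminus E f v)
    (P : List (α × α)) (hPE : ∀ e ∈ P, e ∈ E)
    (hcount : ∀ e ∈ E, P.count e ≤ f e)
    (hmax : ∀ Q : List (α × α), IsPath Q → (∀ e ∈ Q, e ∈ E) →
      (∀ e ∈ E, Q.count e ≤ f e) → Q.length ≤ P.length)
    (hlt : P.length < ∑ e ∈ E, f e) :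
    ∃ x y : α, (x, y) ∈ E ∧ P.count (x, y) < f (x, y) ∧
      ∃ e ∈ P, e.1 = x ∨ e.2 = x := by
  obtain ⟨e₀, he₀, hlt₀⟩ := exists_count_lt_of_length_lt hPE hlt
  have hPne : P ≠ [] := by
    rintro rfl
    have hsingle := hmax [e₀] (List.isChain_singleton e₀) (by simpa using he₀) fun e _ => by
      rcases eq_or_ne e e₀ with rfl | hne
      · simpa [Nat.one_le_iff_ne_zero, Nat.pos_iff_ne_zero] using hlt₀
      · simp [hne.symm]
    simp at hsingle
  obtain ⟨⟨x, y⟩, he, hlt', hx⟩ :=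
    exists_count_lt_fst_mem_vertices hE hf hconn hbal hPne hPE hcount ⟨e₀, he₀, hlt₀⟩
  exact ⟨x, y, he, hlt', mem_vertices.1 hx⟩

theorem stmt19 {α : Type*} [DecidableEq α] (V : Finset α) (E : Finset (α × α))
    (f : α × α → ℕ) (hE : ∀ e ∈ E, e.1 ∈ V ∧ e.2 ∈ V)
    (hf : ∀ e ∈ E, 1 ≤ f e)
    (hconn : ConnectedGraph V E)
    (hbal : ∀ v : α, Fplus E f v = Fminus E f v)
    (P : List (α × α)) (hP : IsPath P) (hPE : ∀ e ∈ P, e ∈ E)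
    (hcount : ∀ e ∈ E, P.count e ≤ f e)
    (hmax : ∀ Q : List (α × α), IsPath Q → (∀ e ∈ Q, e ∈ E) →
      (∀ e ∈ E, Q.count e ≤ f e) → Q.length ≤ P.length)
    (hlt : P.length < ∑ e ∈ E, f e) :
    ∃ x y : α, (x, y) ∈ E ∧ P.count (x, y) < f (x, y) ∧
      ∃ e ∈ P, e.1 = x ∨ e.2 = x :=
  stmt19_general V E f hE hf hconn hbal P hPE hcount hmax hlt
end
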